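/- Let m ≥ 1 be an integer and let b, c be even nonnegative integers with b ≤ c. Then, in ℚ, ( det_{1≤i,j≤m}( C( (b+c)/2, b/2 − m + i + j − 1 ) ) )² = B(m, b/2, c/2)², where B(a,b,c) = ∏_{i=1}^{a} (c+i)_b / (i)_b. -/
import Mathlib


open Finset

/-- Binomial coefficient `C(n,k)` with integer lower index, zero when `k < 0` or `k > n`. -/
def ibinom (n k : ℤ) : ℚ :=
  if 0 ≤ k ∧ k ≤ n then (Nat.choose n.toNat k.toNat : ℚ) else 0

/-- Shifted factorial (Pochhammer) `(a)_n = a(a+1)⋯(a+n-1)`. -/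
def poch (a : ℚ) (n : ℕ) : ℚ := ∏ k ∈ Finset.range n, (a + k)

/-- MacMahon's box formula `B(a,b,c) = ∏_{i=1}^{a} (c+i)_b / (i)_b`. -/
def BB (a b c : ℕ) : ℚ := ∏ i ∈ Finset.Icc 1 a, poch ((c + i : ℕ) : ℚ) b / poch (i : ℚ) b

open Matrix


lemma det_ident_except_two {R : Type*} [CommRing R] {N : ℕ} (M : Matrix (Fin N) (Fin N) R)
    (p q : Fin N) (hpq : p ≠ q)
    (h : ∀ j, j ≠ p → j ≠ q → ∀ i, M i j = if i = j then 1 else 0) :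
    M.det = M p p * M q q - M p q * M q p := by
  classical
  have key : ∀ σ : Equiv.Perm (Fin N), (∀ j, j ≠ p → j ≠ q → σ j = j) →
      σ = 1 ∨ σ = Equiv.swap p q := by
    intro σ h'
    have hmem : ∀ x : Fin N, σ x = p ∨ σ x = q ∨ (x ≠ p ∧ x ≠ q ∧ σ x = x) := by
      intro x
      by_cases hx1 : x = p
      · rcases eq_or_ne (σ x) p with h1 | h1
        · exact Or.inl h1
        rcases eq_or_ne (σ x) q with h2 | h2
        · exact Or.inr (Or.inl h2)
        · exact absurd ((σ.injective (h' _ h1 h2)).trans hx1) h1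
      by_cases hx2 : x = q
      · rcases eq_or_ne (σ x) p with h1 | h1
        · exact Or.inl h1
        rcases eq_or_ne (σ x) q with h2 | h2
        · exact Or.inr (Or.inl h2)
        · exact absurd ((σ.injective (h' _ h1 h2)).trans hx2) h2
      · exact Or.inr (Or.inr ⟨hx1, hx2, h' x hx1 hx2⟩)
    rcases hmem p with hp | hp | hp
    · -- σ p = p
      have hq : σ q = q := by
        rcases hmem q with h1 | h1 | h1
        · exact absurd (σ.injective (h1.trans hp.symm)) hpq.symm
        · exact h1
        · exact absurd rfl h1.2.1
      left
      ext j
      by_cases hj1 : j = p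
      · simp [hj1, hp]
      by_cases hj2 : j = q
      · simp [hj2, hq]
      · simp [h' j hj1 hj2]
    · -- σ p = q
      have hq : σ q = p := by
        rcases hmem q with h1 | h1 | h1
        · exact h1
        · exact absurd (σ.injective (h1.trans hp.symm)) hpq.symm
        · exact absurd rfl h1.2.1
      right
      ext j
      by_cases hj1 : j = p
      · simp [hj1, hp, Equiv.swap_apply_left]
      by_cases hj2 : j = q
      · simp [hj2, hq, Equiv.swap_apply_right]
      · simp [h' j hj1 hj2, Equiv.swap_apply_of_ne_of_ne hj1 hj2]
    · exact absurd rfl hp.1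
  rw [Matrix.det_apply']
  have hswapne : (1 : Equiv.Perm (Fin N)) ≠ Equiv.swap p q := by
    intro hcon
    have := congr_arg (fun σ : Equiv.Perm (Fin N) => σ p) hcon
    simp [Equiv.swap_apply_left] at this
    exact hpq this
  have hsub : ({1, Equiv.swap p q} : Finset (Equiv.Perm (Fin N))) ⊆ univ := subset_univ _
  rw [← Finset.sum_subset hsub ?van]
  case van =>
    intro σ _ hσ
    simp only [mem_insert, mem_singleton] at hσ
    push_neg at hσ
    have : ¬ (∀ j, j ≠ p → j ≠ q → σ j = j) := by
      intro hall
      rcases key σ hall with h1 | h1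
      · exact hσ.1 h1
      · exact hσ.2 h1
    push_neg at this
    obtain ⟨j, hj1, hj2, hj3⟩ := this
    have h0 : M (σ j) j = 0 := by rw [h j hj1 hj2 (σ j), if_neg hj3]
    have : ∏ i, M (σ i) i = 0 :=
      Finset.prod_eq_zero (f := fun i => M (σ i) i) (mem_univ j) h0
    rw [this, mul_zero]
  rw [Finset.sum_pair hswapne]
  have hdiag : ∏ i, M ((1 : Equiv.Perm (Fin N)) i) i = M p p * M q q := by
    have := Finset.prod_subset (f := fun i => M i i) (Finset.subset_univ ({p, q} : Finset (Fin N)))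
      (fun j _ hj => by
        simp only [mem_insert, mem_singleton] at hj
        push_neg at hj
        show M j j = 1
        rw [h j hj.1 hj.2 j, if_pos rfl])
    rw [show (∏ i, M ((1 : Equiv.Perm (Fin N)) i) i) = ∏ i, M i i by simp, ← this,
      Finset.prod_pair hpq]
  have hswapprod : ∏ i, M (Equiv.swap p q i) i = M q p * M p q := by
    have := Finset.prod_subset (f := fun i => M (Equiv.swap p q i) i)
      (Finset.subset_univ ({p, q} : Finset (Fin N)))
      (fun j _ hj => by
        simp only [mem_insert, mem_singleton] at hj
        push_neg at hj
        show M (Equiv.swap p q j) j = 1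
        rw [Equiv.swap_apply_of_ne_of_ne hj.1 hj.2, h j hj.1 hj.2 j, if_pos rfl])
    rw [← this, Finset.prod_pair hpq, Equiv.swap_apply_left, Equiv.swap_apply_right]
  rw [hdiag, hswapprod]
  simp [Equiv.Perm.sign_swap hpq]
  ring

section DJ
variable {R : Type*} [CommRing R] {m : ℕ}

lemma col_expand_zero (M : Matrix (Fin (m+2)) (Fin (m+2)) R) (d : R)
    (h0 : ∀ i, M i 0 = if i = 0 then d else 0) :
    M.det = d * (M.submatrix Fin.succ Fin.succ).det := by
  rw [Matrix.det_succ_column_zero]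
  rw [Finset.sum_eq_single 0]
  · simp [h0, Fin.succAbove_zero]
  · intro i _ hi
    simp [h0, hi]
  · simp

lemma col_expand_last (M : Matrix (Fin (m+1)) (Fin (m+1)) R) (d : R)
    (h0 : ∀ i, M i (Fin.last m) = if i = Fin.last m then d else 0) :
    M.det = d * (M.submatrix Fin.castSucc Fin.castSucc).det := by
  rw [Matrix.det_succ_column M (Fin.last m)]
  rw [Finset.sum_eq_single (Fin.last m)]
  · have : ((Fin.last m : ℕ) + (Fin.last m : ℕ)) = 2 * m := by simp [Fin.val_last]; ring
    simp [h0, this, pow_mul, Fin.succAbove_last]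
  · intro i _ hi
    simp [h0, hi]
  · simp

lemma row_expand_zero (M : Matrix (Fin (m+2)) (Fin (m+2)) R)
    (i0 : Fin (m+2)) :
    (M.updateRow 0 (Pi.single i0 1)).det
      = (-1) ^ (i0 : ℕ) * ((M.updateRow 0 (Pi.single i0 1)).submatrix Fin.succ i0.succAbove).det := by
  rw [Matrix.det_succ_row_zero]
  rw [Finset.sum_eq_single i0]
  · simp [Pi.single_apply]
  · intro j _ hj
    simp [Pi.single_apply, hj]
  · simp

lemma row_expand_last (M : Matrix (Fin (m+2)) (Fin (m+2)) R)
    (i0 : Fin (m+2)) :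
    (M.updateRow (Fin.last (m+1)) (Pi.single i0 1)).det
      = (-1) ^ ((m+1) + (i0 : ℕ))
        * ((M.updateRow (Fin.last (m+1)) (Pi.single i0 1)).submatrix Fin.castSucc i0.succAbove).det := by
  rw [Matrix.det_succ_row _ (Fin.last (m+1))]
  rw [Finset.sum_eq_single i0]
  · simp [Pi.single_apply, Fin.succAbove_last, Fin.val_last]
  · intro j _ hj
    simp [Pi.single_apply, hj]
  · simp

omit [CommRing R] in
lemma updateRow_zero_submatrix_succ [Zero R] (M : Matrix (Fin (m+2)) (Fin (m+2)) R)
    (u : Fin (m+2) → R) (f : Fin (m+1) → Fin (m+2)) :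
    (M.updateRow 0 u).submatrix Fin.succ f = M.submatrix Fin.succ f := by
  ext i j
  simp [Matrix.updateRow_apply, Fin.succ_ne_zero]

omit [CommRing R] in
lemma updateRow_last_submatrix_castSucc [Zero R] (M : Matrix (Fin (m+2)) (Fin (m+2)) R)
    (u : Fin (m+2) → R) (f : Fin (m+1) → Fin (m+2)) :
    (M.updateRow (Fin.last (m+1)) u).submatrix Fin.castSucc f = M.submatrix Fin.castSucc f := by
  ext i j
  have : (Fin.castSucc i) ≠ Fin.last (m+1) := (Fin.castSucc_lt_last i).ne
  simp [Matrix.updateRow_apply, this]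

lemma adj_corner_00 (A : Matrix (Fin (m+2)) (Fin (m+2)) R) :
    adjugate A 0 0 = (A.submatrix Fin.succ Fin.succ).det := by
  rw [Matrix.adjugate_apply, row_expand_zero, updateRow_zero_submatrix_succ]
  simp [Fin.succAbove_zero]

lemma adj_corner_LL (A : Matrix (Fin (m+2)) (Fin (m+2)) R) :
    adjugate A (Fin.last (m+1)) (Fin.last (m+1))
      = (A.submatrix Fin.castSucc Fin.castSucc).det := by
  rw [Matrix.adjugate_apply, row_expand_last, updateRow_last_submatrix_castSucc]
  have : (-1 : R) ^ ((m+1) + (Fin.last (m+1) : ℕ)) = 1 := by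
    simp [Fin.val_last, ← two_mul, pow_mul]
  rw [this, one_mul, Fin.succAbove_last]

lemma adj_corner_L0 (A : Matrix (Fin (m+2)) (Fin (m+2)) R) :
    adjugate A (Fin.last (m+1)) 0
      = (-1) ^ (m+1) * (A.submatrix Fin.succ Fin.castSucc).det := by
  rw [Matrix.adjugate_apply, row_expand_zero, updateRow_zero_submatrix_succ]
  rw [Fin.succAbove_last, Fin.val_last]

lemma adj_corner_0L (A : Matrix (Fin (m+2)) (Fin (m+2)) R) :
    adjugate A 0 (Fin.last (m+1))
      = (-1) ^ (m+1) * (A.submatrix Fin.castSucc Fin.succ).det := by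
  rw [Matrix.adjugate_apply, row_expand_last, updateRow_last_submatrix_castSucc]
  rw [Fin.succAbove_zero]
  norm_num

lemma dj_aux (A : Matrix (Fin (m+2)) (Fin (m+2)) R) :
    A.det * ((A.submatrix Fin.succ Fin.succ).det * (A.submatrix Fin.castSucc Fin.castSucc).det
      - (A.submatrix Fin.succ Fin.castSucc).det * (A.submatrix Fin.castSucc Fin.succ).det)
    = A.det * A.det * (A.submatrix (Fin.succ ∘ Fin.castSucc) (Fin.succ ∘ Fin.castSucc)).det := by
  classical
  set L : Fin (m+2) := Fin.last (m+1) with hLdef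
  have hL0 : (0 : Fin (m+2)) ≠ L := by simp [hLdef, Fin.ext_iff]
  set C : Matrix (Fin (m+2)) (Fin (m+2)) R :=
    ((1 : Matrix (Fin (m+2)) (Fin (m+2)) R).updateCol 0
        (fun i => adjugate A i 0)).updateCol L (fun i => adjugate A i L) with hC
  have hCapp : ∀ i j, C i j = if j = L then adjugate A i L
      else if j = 0 then adjugate A i 0 else (1 : Matrix (Fin (m+2)) (Fin (m+2)) R) i j := by
    intro i j
    rw [hC, Matrix.updateCol_apply, Matrix.updateCol_apply]
  have hCdet : C.det = adjugate A 0 0 * adjugate A L L - adjugate A 0 L * adjugate A L 0 := by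
    rw [det_ident_except_two C 0 L hL0 (fun j hj0 hjL i => by
      rw [hCapp, if_neg hjL, if_neg hj0, Matrix.one_apply])]
    rw [hCapp, if_neg hL0, if_pos rfl, hCapp, if_pos rfl, hCapp, if_pos rfl,
      hCapp, if_neg hL0, if_pos rfl]
  set D : Matrix (Fin (m+2)) (Fin (m+2)) R :=
    (A.updateCol 0 (fun i => if i = 0 then A.det else 0)).updateCol L
      (fun i => if i = L then A.det else 0) with hD
  have hDapp : ∀ i j, D i j = if j = L then (if i = L then A.det else 0)
      else if j = 0 then (if i = 0 then A.det else 0) else A i j := by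
    intro i j
    rw [hD, Matrix.updateCol_apply, Matrix.updateCol_apply]
  have key : ∀ i j : Fin (m+2), (∑ k, A i k * adjugate A k j)
      = A.det * (if i = j then 1 else 0) := by
    intro i j
    rw [← Matrix.mul_apply, Matrix.mul_adjugate]
    simp [Matrix.smul_apply, Matrix.one_apply]
  have hAC : A * C = D := by
    ext i j
    rw [Matrix.mul_apply, hDapp]
    by_cases hjL : j = L
    · rw [if_pos hjL]
      have hsum : (∑ k, A i k * C k j) = ∑ k, A i k * adjugate A k j :=
        Finset.sum_congr rfl (fun k _ => by rw [hCapp, if_pos hjL, hjL])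
      rw [hsum, key, hjL]
      by_cases hij : i = L <;> simp [hij]
    · rw [if_neg hjL]
      by_cases hj0 : j = 0
      · rw [if_pos hj0]
        have hsum : (∑ k, A i k * C k j) = ∑ k, A i k * adjugate A k j :=
          Finset.sum_congr rfl (fun k _ => by rw [hCapp, if_neg hjL, if_pos hj0, hj0])
        rw [hsum, key, hj0]
        by_cases hij : i = 0 <;> simp [hij]
      · rw [if_neg hj0]
        have hsum : (∑ k, A i k * C k j)
            = ∑ k, A i k * (1 : Matrix (Fin (m+2)) (Fin (m+2)) R) k j :=
          Finset.sum_congr rfl (fun k _ => by rw [hCapp, if_neg hjL, if_neg hj0])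
        rw [hsum, ← Matrix.mul_apply, Matrix.mul_one]
  set E : Matrix (Fin (m+1)) (Fin (m+1)) R :=
    (A.submatrix Fin.succ Fin.succ).updateCol (Fin.last m)
      (fun i => if i = Fin.last m then A.det else 0) with hE
  have hsuccL : ∀ j : Fin (m+1), (Fin.succ j = L) ↔ (j = Fin.last m) := by
    intro j
    simp [hLdef, Fin.ext_iff]
  have hsuccne0 : ∀ j : Fin (m+1), (Fin.succ j : Fin (m+2)) ≠ 0 := fun j => Fin.succ_ne_zero j
  have hDsub : D.submatrix Fin.succ Fin.succ = E := by
    ext i j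
    rw [Matrix.submatrix_apply, hDapp, hE, Matrix.updateCol_apply]
    by_cases hj : j = Fin.last m
    · rw [if_pos hj, if_pos ((hsuccL j).mpr hj)]
      by_cases hi : i = Fin.last m
      · rw [if_pos hi, if_pos ((hsuccL i).mpr hi)]
      · rw [if_neg hi, if_neg (fun hcon => hi ((hsuccL i).mp hcon))]
    · rw [if_neg hj, if_neg (fun hcon => hj ((hsuccL j).mp hcon)), if_neg (hsuccne0 j),
        Matrix.submatrix_apply]
  have hEsub : E.submatrix Fin.castSucc Fin.castSucc
      = A.submatrix (Fin.succ ∘ Fin.castSucc) (Fin.succ ∘ Fin.castSucc) := by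
    ext i j
    have hne : (Fin.castSucc j) ≠ Fin.last m := (Fin.castSucc_lt_last j).ne
    rw [Matrix.submatrix_apply, hE, Matrix.updateCol_apply, if_neg hne,
      Matrix.submatrix_apply, Matrix.submatrix_apply]
    rfl
  have hDdet : D.det = A.det * (A.det
      * (A.submatrix (Fin.succ ∘ Fin.castSucc) (Fin.succ ∘ Fin.castSucc)).det) := by
    rw [col_expand_zero D A.det (fun i => by rw [hDapp, if_neg hL0, if_pos rfl])]
    rw [hDsub]
    rw [col_expand_last E A.det (fun i => by rw [hE, Matrix.updateCol_apply, if_pos rfl])]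
    rw [hEsub]
  have hmain : A.det * C.det = D.det := by rw [← hAC, Matrix.det_mul]
  rw [hCdet] at hmain
  rw [adj_corner_00, adj_corner_LL, adj_corner_0L, adj_corner_L0] at hmain
  rw [hDdet] at hmain
  have hsign : ((-1:R)^(m+1)) * ((-1:R)^(m+1)) = 1 := by
    rw [← pow_add, show (m+1)+(m+1) = 2*(m+1) by ring, pow_mul]
    norm_num
  have h2 : (-1:R) ^ (m+1) * (A.submatrix Fin.castSucc Fin.succ).det
      * ((-1:R) ^ (m+1) * (A.submatrix Fin.succ Fin.castSucc).det)
      = (A.submatrix Fin.succ Fin.castSucc).det * (A.submatrix Fin.castSucc Fin.succ).det := by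
    rw [mul_mul_mul_comm, hsign, one_mul, mul_comm]
  rw [h2] at hmain
  linear_combination hmain

end DJ

lemma desnanot_jacobi {R : Type*} [CommRing R] {m : ℕ}
    (A : Matrix (Fin (m+2)) (Fin (m+2)) R) :
    A.det * (A.submatrix (Fin.succ ∘ Fin.castSucc) (Fin.succ ∘ Fin.castSucc)).det
    = (A.submatrix Fin.succ Fin.succ).det * (A.submatrix Fin.castSucc Fin.castSucc).det
      - (A.submatrix Fin.succ Fin.castSucc).det * (A.submatrix Fin.castSucc Fin.succ).det := by
  let A' := Matrix.mvPolynomialX (Fin (m+2)) (Fin (m+2)) ℤ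
  have hgen : A'.det * (A'.submatrix (Fin.succ ∘ Fin.castSucc) (Fin.succ ∘ Fin.castSucc)).det
      = (A'.submatrix Fin.succ Fin.succ).det * (A'.submatrix Fin.castSucc Fin.castSucc).det
        - (A'.submatrix Fin.succ Fin.castSucc).det * (A'.submatrix Fin.castSucc Fin.succ).det := by
    apply mul_left_cancel₀ (Matrix.det_mvPolynomialX_ne_zero (Fin (m+2)) ℤ)
    rw [dj_aux A']
    ring
  set f := (MvPolynomial.aeval fun p : (Fin (m+2)) × (Fin (m+2)) => A p.1 p.2 :
    MvPolynomial ((Fin (m+2)) × (Fin (m+2))) ℤ →ₐ[ℤ] R) with hf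
  have hA : f.mapMatrix A' = A := Matrix.mvPolynomialX_mapMatrix_aeval ℤ A
  have hsub : ∀ {k : ℕ} (e₁ e₂ : Fin k → Fin (m+2)),
      (f.mapMatrix A').submatrix e₁ e₂ = f.mapMatrix (A'.submatrix e₁ e₂) := by
    intro k e₁ e₂
    ext i j
    rfl
  rw [← hA, hsub, hsub, hsub, hsub, hsub, ← AlgHom.map_det, ← AlgHom.map_det, ← AlgHom.map_det,
    ← AlgHom.map_det, ← AlgHom.map_det, ← AlgHom.map_det]
  have h := congrArg f hgen
  simp only [_root_.map_mul, map_sub] at h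
  exact h


def Fq (k : ℕ) : ℚ := (Nat.factorial k : ℚ)

def Pden (M x : ℕ) : ℚ := ∏ i ∈ Finset.range M, Fq (x + i)

def Pnum (n M : ℕ) : ℚ := ∏ i ∈ Finset.range M, (Fq i * Fq (n + i))

def Pprod (n M b : ℕ) : ℚ :=
  ∏ i ∈ Finset.range M, (Fq i * Fq (n + i)) / (Fq (b + i) * Fq (n - b + i))

lemma Fq_ne_zero (k : ℕ) : Fq k ≠ 0 := by
  simp [Fq, Nat.factorial_ne_zero]

lemma Fq_succ (k : ℕ) : Fq (k + 1) = ((k : ℚ) + 1) * Fq k := by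
  simp only [Fq, Nat.factorial_succ]
  push_cast
  ring

lemma Pden_ne_zero (M x : ℕ) : Pden M x ≠ 0 :=
  Finset.prod_ne_zero_iff.mpr (fun i _ => Fq_ne_zero _)

lemma Pden_succ (M x : ℕ) : Pden (M + 1) x = Pden M x * Fq (x + M) :=
  Finset.prod_range_succ _ _

lemma Pden_shift (M x : ℕ) : Pden M (x + 1) * Fq x = Pden M x * Fq (x + M) := by
  have h1 : Pden M (x+1) * Fq x = ∏ i ∈ Finset.range (M+1), Fq (x + i) := by
    rw [Finset.prod_range_succ' (fun i => Fq (x + i)) M]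
    rw [add_zero]
    congr 1
    exact Finset.prod_congr rfl fun i _ => by rw [show x + (i+1) = x + 1 + i by omega]
  rw [h1, Finset.prod_range_succ]
  rfl

lemma Pnum_succ (n M : ℕ) : Pnum n (M + 1) = Pnum n M * (Fq M * Fq (n + M)) :=
  Finset.prod_range_succ _ _

lemma Pprod_eq (n M b : ℕ) : Pprod n M b = Pnum n M / (Pden M b * Pden M (n - b)) := by
  rw [Pprod, Pnum, Pden, Pden, Finset.prod_div_distrib, ← Finset.prod_mul_distrib]

lemma Pprod_zero_left (n M : ℕ) : Pprod n M 0 = 1 := by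
  rw [Pprod]
  apply Finset.prod_eq_one
  intro i _
  rw [Nat.zero_add, Nat.sub_zero]
  exact div_self (mul_ne_zero (Fq_ne_zero _) (Fq_ne_zero _))

lemma Pprod_n_right (n M : ℕ) : Pprod n M n = 1 := by
  rw [Pprod]
  apply Finset.prod_eq_one
  intro i _
  rw [Nat.sub_self, Nat.zero_add, mul_comm (Fq (n+i))]
  exact div_self (mul_ne_zero (Fq_ne_zero _) (Fq_ne_zero _))

lemma Pprod_ne_zero (n M b : ℕ) : Pprod n M b ≠ 0 := by
  rw [Pprod_eq]
  exact div_ne_zero (Finset.prod_ne_zero_iff.mpr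
      (fun i _ => mul_ne_zero (Fq_ne_zero _) (Fq_ne_zero _)))
    (mul_ne_zero (Pden_ne_zero _ _) (Pden_ne_zero _ _))

lemma Pprod_one (n b : ℕ) (hb : b ≤ n) : Pprod n 1 b = (n.choose b : ℚ) := by
  have h := Nat.choose_mul_factorial_mul_factorial hb
  have hnat : n.factorial = n.choose b * (b.factorial * (n-b).factorial) := by
    rw [← h]; ring
  have hq : (Nat.factorial n : ℚ)
      = (n.choose b : ℚ) * ((Nat.factorial b : ℚ) * (Nat.factorial (n-b) : ℚ)) := by
    exact_mod_cast congrArg (Nat.cast : ℕ → ℚ) hnat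
  rw [Pprod, Finset.prod_range_one]
  have hz : Fq 0 = 1 := by simp [Fq]
  rw [show n + 0 = n from rfl, show b + 0 = b from rfl, show n - b + 0 = n - b from rfl,
    hz, one_mul]
  rw [div_eq_iff (mul_ne_zero (Fq_ne_zero _) (Fq_ne_zero _))]
  rw [show Fq n = (Nat.factorial n : ℚ) from rfl, hq]
  rfl

lemma key_algebra (k b g : ℕ) (hb : 1 ≤ b) (hg : 1 ≤ g) :
    Pprod (b+g) (k+2) b * Pprod (b+g) k b
      = Pprod (b+g) (k+1) b ^ 2
        - Pprod (b+g) (k+1) (b+1) * Pprod (b+g) (k+1) (b-1) := by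
  set n := b + g with hn
  have hsub1 : n - b = g := by omega
  have hsub2 : n - (b+1) = g - 1 := by omega
  have hsub3 : n - (b-1) = g + 1 := by omega
  rw [Pprod_eq, Pprod_eq, Pprod_eq, Pprod_eq, Pprod_eq, hsub1, hsub2, hsub3]
  -- relations
  have hPb1 : Pden (k+1) b = Pden k b * Fq (b+k) := Pden_succ k b
  have hPb2 : Pden (k+2) b = Pden k b * Fq (b+k) * Fq (b+k+1) := by
    rw [Pden_succ (k+1) b, hPb1, show b + (k+1) = b+k+1 by omega]
  have hPg1 : Pden (k+1) g = Pden k g * Fq (g+k) := Pden_succ k g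
  have hPg2 : Pden (k+2) g = Pden k g * Fq (g+k) * Fq (g+k+1) := by
    rw [Pden_succ (k+1) g, hPg1, show g + (k+1) = g+k+1 by omega]
  have hPbp : Pden (k+1) (b+1) * Fq b = Pden k b * Fq (b+k) * Fq (b+k+1) := by
    rw [Pden_shift (k+1) b, hPb1, show b + (k+1) = b+k+1 by omega]
  have hPbm : Pden (k+1) (b-1) = Pden k b * Fq (b+k) * Fq (b-1) / Fq (b+k) := by
    have h := Pden_shift (k+1) (b-1)
    rw [show b - 1 + 1 = b by omega, show b - 1 + (k+1) = b + k by omega] at h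
    rw [hPb1] at h
    rw [eq_div_iff (Fq_ne_zero (b+k))]
    linarith [h]
  have hPgp : Pden (k+1) (g+1) * Fq g = Pden k g * Fq (g+k) * Fq (g+k+1) := by
    rw [Pden_shift (k+1) g, hPg1, show g + (k+1) = g+k+1 by omega]
  have hPgm : Pden (k+1) (g-1) = Pden k g * Fq (g+k) * Fq (g-1) / Fq (g+k) := by
    have h := Pden_shift (k+1) (g-1)
    rw [show g - 1 + 1 = g by omega, show g - 1 + (k+1) = g + k by omega] at h
    rw [hPg1] at h
    rw [eq_div_iff (Fq_ne_zero (g+k))]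
    linarith [h]
  have hN1 : Pnum n (k+1) = Pnum n k * (Fq k * Fq (n+k)) := Pnum_succ n k
  have hN2 : Pnum n (k+2) = Pnum n k * (Fq k * Fq (n+k)) * (Fq (k+1) * Fq (n+k+1)) := by
    rw [Pnum_succ n (k+1), hN1, show n + (k+1) = n+k+1 by omega]
  -- factorial recursions
  have hFb : Fq b = (b : ℚ) * Fq (b-1) := by
    have h2 : Fq ((b-1)+1) = (((b-1 : ℕ) : ℚ) + 1) * Fq (b-1) := Fq_succ (b-1)
    rw [show (b-1)+1 = b by omega] at h2
    rw [h2, Nat.cast_sub hb]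
    push_cast
    ring
  have hFg : Fq g = (g : ℚ) * Fq (g-1) := by
    have h2 : Fq ((g-1)+1) = (((g-1 : ℕ) : ℚ) + 1) * Fq (g-1) := Fq_succ (g-1)
    rw [show (g-1)+1 = g by omega] at h2
    rw [h2, Nat.cast_sub hg]
    push_cast
    ring
  have hPbp' : Pden (k+1) (b+1) = Pden k b * Fq (b+k) * Fq (b+k+1) / Fq b := by
    rw [eq_div_iff (Fq_ne_zero b)]; exact hPbp
  have hPgp' : Pden (k+1) (g+1) = Pden k g * Fq (g+k) * Fq (g+k+1) / Fq g := by
    rw [eq_div_iff (Fq_ne_zero g)]; exact hPgp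
  have hFbk : Fq (b+k+1) = ((b:ℚ) + k + 1) * Fq (b+k) := by
    have := Fq_succ (b+k); rw [this]; push_cast; ring
  have hFgk : Fq (g+k+1) = ((g:ℚ) + k + 1) * Fq (g+k) := by
    have := Fq_succ (g+k); rw [this]; push_cast; ring
  have hFk : Fq (k+1) = ((k:ℚ) + 1) * Fq k := Fq_succ k
  have hFnk : Fq (n+k+1) = ((b:ℚ) + g + k + 1) * Fq (n+k) := by
    have h2 : Fq ((n+k)+1) = (((n+k : ℕ) : ℚ) + 1) * Fq (n+k) := Fq_succ (n+k)
    rw [show (n+k)+1 = n+k+1 from rfl] at h2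
    rw [h2, hn]
    push_cast
    ring
  rw [hPb2, hPg2, hPbp', hPgp', hPbm, hPgm, hPb1, hPg1, hN2, hN1, hFbk, hFgk, hFk, hFnk,
    hFb, hFg]
  have h1 : Fq (b+k) ≠ 0 := Fq_ne_zero _
  have h2 : Fq (g+k) ≠ 0 := Fq_ne_zero _
  have h3 : Fq (b-1) ≠ 0 := Fq_ne_zero _
  have h4 : Fq (g-1) ≠ 0 := Fq_ne_zero _
  have h5 : Pden k b ≠ 0 := Pden_ne_zero _ _
  have h6 : Pden k g ≠ 0 := Pden_ne_zero _ _
  have h7 : (b:ℚ) ≠ 0 := Nat.cast_ne_zero.mpr (by omega)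
  have h8 : (g:ℚ) ≠ 0 := Nat.cast_ne_zero.mpr (by omega)
  field_simp
  ring

lemma key_algebra' (k b n' : ℕ) (hb : b ≤ n') :
    Pprod n' (k+1) b * Pprod n' (k+1) b
      - (if b+1 ≤ n' then Pprod n' (k+1) (b+1) else 0)
        * (if 1 ≤ b then Pprod n' (k+1) (b-1) else 0)
    = Pprod n' (k+2) b * Pprod n' k b := by
  by_cases hb0 : b = 0
  · subst hb0
    simp [Pprod_zero_left]
  · by_cases hbn : b = n'
    · subst hbn
      rw [if_neg (by omega)]
      simp [Pprod_n_right]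
    · obtain ⟨g, rfl⟩ : ∃ g, n' = b + g := ⟨n' - b, by omega⟩
      have hkey := key_algebra k b g (by omega) (by omega)
      rw [if_pos (by omega), if_pos (by omega)]
      rw [pow_two] at hkey
      linarith [hkey]

def Tmat (n m : ℕ) (B : ℤ) : Matrix (Fin m) (Fin m) ℚ :=
  Matrix.of fun i j => ibinom n (B + (i : ℤ) - (j : ℤ))

def Pfun (n m : ℕ) (B : ℤ) : ℚ :=
  if 0 ≤ B ∧ B ≤ (n : ℤ) then Pprod n m B.toNat else if m = 0 then 1 else 0

theorem Tdet (n : ℕ) : ∀ m (B : ℤ), (Tmat n m B).det = Pfun n m B := by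
  intro m
  induction m using Nat.strong_induction_on with
  | _ m ih =>
    match m with
    | 0 =>
      intro B
      rw [Matrix.det_fin_zero, Pfun]
      split_ifs with h h2
      · rw [Pprod]; simp
      · rfl
      · exact absurd rfl h2
    | 1 =>
      intro B
      rw [Matrix.det_fin_one]
      show ibinom n (B + ((0 : Fin 1) : ℤ) - ((0 : Fin 1) : ℤ)) = Pfun n 1 B
      have h00 : B + ((0 : Fin 1) : ℤ) - ((0 : Fin 1) : ℤ) = B := by simp
      rw [h00, Pfun, ibinom]
      by_cases hB : 0 ≤ B ∧ B ≤ (n : ℤ)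
      · rw [if_pos hB, if_pos hB, Pprod_one n B.toNat (by omega)]
        congr 1
      · rw [if_neg hB, if_neg hB, if_neg (Nat.one_ne_zero)]
    | (k+2) =>
      intro B
      by_cases hB : 0 ≤ B ∧ B ≤ (n : ℤ)
      · have hDJ := desnanot_jacobi (Tmat n (k+2) B)
        have hs1 : (Tmat n (k+2) B).submatrix Fin.succ Fin.succ = Tmat n (k+1) B := by
          ext i j
          simp only [Tmat, Matrix.submatrix_apply, Matrix.of_apply]
          congr 1
          simp [Fin.val_succ]
          push_cast
          ring
        have hs2 : (Tmat n (k+2) B).submatrix Fin.castSucc Fin.castSucc = Tmat n (k+1) B := by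
          ext i j
          simp only [Tmat, Matrix.submatrix_apply, Matrix.of_apply]
          congr 1
        have hs3 : (Tmat n (k+2) B).submatrix Fin.succ Fin.castSucc = Tmat n (k+1) (B+1) := by
          ext i j
          simp only [Tmat, Matrix.submatrix_apply, Matrix.of_apply]
          congr 1
          simp [Fin.val_succ]
          push_cast
          ring
        have hs4 : (Tmat n (k+2) B).submatrix Fin.castSucc Fin.succ = Tmat n (k+1) (B-1) := by
          ext i j
          simp only [Tmat, Matrix.submatrix_apply, Matrix.of_apply]
          congr 1
          simp [Fin.val_succ]
          push_cast
          ring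
        have hs5 : (Tmat n (k+2) B).submatrix (Fin.succ ∘ Fin.castSucc) (Fin.succ ∘ Fin.castSucc)
            = Tmat n k B := by
          ext i j
          simp only [Tmat, Matrix.submatrix_apply, Matrix.of_apply, Function.comp]
          congr 1
          simp [Fin.val_succ]
          push_cast
          ring
        rw [hs1, hs2, hs3, hs4, hs5] at hDJ
        rw [ih k (by omega) B, ih (k+1) (by omega) B, ih (k+1) (by omega) (B+1),
          ih (k+1) (by omega) (B-1)] at hDJ
        have hPfk : Pfun n k B = Pprod n k B.toNat := by rw [Pfun, if_pos hB]
        have hPfm : Pfun n (k+1) B = Pprod n (k+1) B.toNat := by rw [Pfun, if_pos hB]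
        have hQ1 : Pfun n (k+1) (B+1)
            = if B.toNat + 1 ≤ n then Pprod n (k+1) (B.toNat + 1) else 0 := by
          by_cases h : B + 1 ≤ (n : ℤ)
          · rw [Pfun, if_pos ⟨by omega, h⟩, if_pos (by omega), show (B+1).toNat = B.toNat + 1 by omega]
          · rw [Pfun, if_neg (by omega), if_neg (by omega), if_neg (by omega)]
        have hQ2 : Pfun n (k+1) (B-1)
            = if 1 ≤ B.toNat then Pprod n (k+1) (B.toNat - 1) else 0 := by
          by_cases h : 1 ≤ B
          · rw [Pfun, if_pos ⟨by omega, by omega⟩, if_pos (by omega),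
              show (B-1).toNat = B.toNat - 1 by omega]
          · rw [Pfun, if_neg (by omega), if_neg (by omega), if_neg (by omega)]
        rw [hPfk, hPfm, hQ1, hQ2] at hDJ
        rw [Pfun, if_pos hB]
        apply mul_right_cancel₀ (Pprod_ne_zero n k B.toNat)
        rw [hDJ, key_algebra' k B.toNat n (by omega)]
      · rw [Pfun, if_neg hB, if_neg (by omega)]
        by_cases h0 : B < 0
        · apply Matrix.det_eq_zero_of_row_eq_zero 0
          intro j
          show ibinom n (B + ((0 : Fin (k+2)) : ℤ) - (j : ℤ)) = 0
          rw [ibinom, if_neg]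
          have hj : 0 ≤ (j : ℤ) := Int.natCast_nonneg _
          have h00 : ((0 : Fin (k+2)) : ℤ) = 0 := by simp
          omega
        · apply Matrix.det_eq_zero_of_column_eq_zero 0
          intro i
          show ibinom n (B + (i : ℤ) - ((0 : Fin (k+2)) : ℤ)) = 0
          rw [ibinom, if_neg]
          have hi : 0 ≤ (i : ℤ) := Int.natCast_nonneg _
          have h00 : ((0 : Fin (k+2)) : ℤ) = 0 := by simp
          omega

lemma pochF (a r : ℕ) : Fq a * poch (((a + 1 : ℕ)) : ℚ) r = Fq (a + r) := by
  induction r with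
  | zero => simp [poch]
  | succ r ihr =>
    rw [poch, Finset.prod_range_succ, ← mul_assoc]
    rw [show (∏ k ∈ Finset.range r, (((a+1 : ℕ):ℚ) + k)) = poch ((a+1 : ℕ) : ℚ) r from rfl]
    rw [ihr, show a + (r+1) = (a+r)+1 by omega, Fq_succ]
    push_cast
    ring

lemma poch_eq (a r : ℕ) : poch (((a + 1 : ℕ)) : ℚ) r = Fq (a + r) / Fq a := by
  rw [eq_div_iff (Fq_ne_zero a), mul_comm, pochF]

lemma BB_eq (m β γ : ℕ) : BB m β γ = Pprod (β + γ) m β := by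
  rw [BB, Pprod, ← Finset.Ico_add_one_right_eq_Icc, Finset.prod_Ico_eq_prod_range]
  rw [show m + 1 - 1 = m from rfl]
  apply Finset.prod_congr rfl
  intro i _
  have h1 : poch ((γ + (1 + i) : ℕ) : ℚ) β = Fq (γ + i + β) / Fq (γ + i) := by
    rw [show (γ + (1 + i) : ℕ) = (γ + i) + 1 by omega, poch_eq]
  have h2 : poch (((1 + i : ℕ)) : ℚ) β = Fq (i + β) / Fq i := by
    rw [show (1 + i : ℕ) = i + 1 by omega, poch_eq]
  have h3 : ((1 + i : ℕ) : ℚ) = (((1 + i : ℕ)) : ℚ) := rfl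
  rw [h1]
  rw [show ((1 + i : ℕ) : ℚ) = (((1 + i : ℕ) : ℕ) : ℚ) from rfl] at h2 ⊢
  rw [h2]
  rw [show β + γ - β = γ by omega, show β + γ + i = γ + i + β by omega,
    show β + i = i + β by omega]
  rw [div_div_div_eq, div_eq_div_iff (mul_ne_zero (Fq_ne_zero _) (Fq_ne_zero _))
    (mul_ne_zero (Fq_ne_zero _) (Fq_ne_zero _))]
  ring

theorem stmt15 (m b c : ℕ) (hm : 1 ≤ m) (hbe : Even b) (hce : Even c) (hbc : b ≤ c) :
    ((Matrix.of fun i j : Fin m =>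
        ibinom ((((b + c) / 2 : ℕ)) : ℤ)
          (((b / 2 : ℕ) : ℤ) - (m : ℤ) + ((i.1 : ℤ) + 1) + ((j.1 : ℤ) + 1) - 1)).det) ^ 2
    = (BB m (b / 2) (c / 2)) ^ 2 := by
  obtain ⟨β, rfl⟩ := hbe
  obtain ⟨γ, rfl⟩ := hce
  have hb2 : (β + β) / 2 = β := by omega
  have hc2 : (γ + γ) / 2 = γ := by omega
  have hbc2 : (β + β + (γ + γ)) / 2 = β + γ := by omega
  simp only [hb2, hc2, hbc2]
  have hM : (Matrix.of fun i j : Fin m =>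
      ibinom ((β + γ : ℕ) : ℤ)
        (((β : ℕ) : ℤ) - (m : ℤ) + ((i.1 : ℤ) + 1) + ((j.1 : ℤ) + 1) - 1))
      = (Tmat (β+γ) m ((β : ℕ) : ℤ)).submatrix id ⇑Fin.revPerm := by
    ext i j
    simp only [Tmat, Matrix.submatrix_apply, Matrix.of_apply, id_eq]
    have hrev : ((Fin.revPerm j : Fin m) : ℕ) = m - 1 - (j : ℕ) := by
      simp [Fin.revPerm, Fin.val_rev]
      omega
    have hj := j.isLt
    have hi := i.isLt
    congr 1
    omega
  rw [hM, Matrix.det_permute', Tdet]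
  have hPf : Pfun (β+γ) m ((β : ℕ) : ℤ) = Pprod (β+γ) m β := by
    rw [Pfun, if_pos ⟨by positivity, by exact_mod_cast Nat.le_add_right β γ⟩]
    norm_num
  rw [hPf, BB_eq, mul_pow]
  have hsgn : (((Equiv.Perm.sign (Fin.revPerm : Equiv.Perm (Fin m))) : ℤ) : ℚ) ^ 2 = 1 := by
    rcases Int.units_eq_one_or (Equiv.Perm.sign (Fin.revPerm : Equiv.Perm (Fin m))) with h | h <;>
      rw [h] <;> norm_num
  rw [hsgn, one_mul]
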